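/- arXiv:1601.07039 — 3 statements merged into one kernel-verified Lean document; each statement's English description precedes it below -/
import Mathlib

section
/- For a ∈ F_{3^m}*, the points (a^{1/3}, a^{1/3}) and (a^{1/3}, −a^{1/3}) lie on the curve y^2 = x^3 + x^2 − a and are exactly the points of order 3 in the group E(a); in particular (a^{1/3}, a^{1/3}) has order 3. -/
/-!
Over a field of characteristic 3, `P = (b, b)` is a flex of `y² = x³ + x² - b³`: the tangent at `P`
is the line `y = x`, and substituting it gives `x³ - b³ = (x - b)³`. Hence `2P = -P = (b, -b)`,
so both points are killed by 3.
-/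

namespace WeierstrassCurve.Affine.Point

variable {F : Type*} [Field F] [DecidableEq F] {W : WeierstrassCurve.Affine F}

lemma add_self_eq_neg_of_addX_slope_eq {x y : F} {h : W.Nonsingular x y}
    (hy : y ≠ W.negY x y) (hx : W.addX x x (W.slope x x y y) = x) :
    some _ _ h + some _ _ h = -some _ _ h := by
  rw [add_self_of_Y_ne hy, neg_some, some.injEq]
  exact ⟨hx, by rw [addY, negAddY, hx, sub_self, mul_zero, zero_add]⟩

lemma three_nsmul_eq_zero_of_addX_slope_eq {x y : F} {h : W.Nonsingular x y}
    (hy : y ≠ W.negY x y) (hx : W.addX x x (W.slope x x y y) = x) :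
    3 • some _ _ h = 0 := by
  rw [succ_nsmul, two_nsmul, add_self_eq_neg_of_addX_slope_eq hy hx, neg_add_cancel]

end WeierstrassCurve.Affine.Point

open WeierstrassCurve.Affine

section CubeCurve

variable {F : Type*}

abbrev cubeCurve [CommRing F] (b : F) : WeierstrassCurve F := ⟨0, 1, 0, 0, -b ^ 3⟩

lemma cubeCurve_equation_self [CommRing F] (b : F) : (cubeCurve b).toAffine.Equation b b := by
  rw [equation_iff]
  ring

lemma cubeCurve_equation_neg [CommRing F] (b : F) : (cubeCurve b).toAffine.Equation b (-b) := by
  rw [equation_iff]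
  ring

lemma cubeCurve_negY [CommRing F] (b : F) : (cubeCurve b).toAffine.negY b b = -b := by
  simp [negY]

variable [Field F] [CharP F 3] {b : F}

lemma two_mul_ne_zero_of_charP_three (hb : b ≠ 0) : 2 * b ≠ 0 := by
  have h3 : (3 : F) = 0 := CharP.cast_eq_zero F 3
  refine mul_ne_zero (fun h2 => one_ne_zero (α := F) ?_) hb
  linear_combination h3 - h2

lemma cubeCurve_self_ne_negY (hb : b ≠ 0) : b ≠ (cubeCurve b).toAffine.negY b b := by
  rw [cubeCurve_negY]
  intro h
  exact two_mul_ne_zero_of_charP_three hb (by linear_combination h)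

lemma cubeCurve_addX_slope [DecidableEq F] (hb : b ≠ 0) :
    (cubeCurve b).toAffine.addX b b ((cubeCurve b).toAffine.slope b b b b) = b := by
  have h3 : (3 : F) = 0 := CharP.cast_eq_zero F 3
  have hslope : (cubeCurve b).toAffine.slope b b b b = 1 := by
    rw [slope_of_Y_ne rfl (cubeCurve_self_ne_negY hb), cubeCurve_negY, div_eq_one_iff_eq]
    · linear_combination b ^ 2 * h3
    · rw [sub_neg_eq_add, ← two_mul]
      exact two_mul_ne_zero_of_charP_three hb
  rw [hslope, addX]
  linear_combination -b * h3

end CubeCurve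

open Classical in
theorem cube_root_points_order_three_general
    (F : Type*) [Field F] [CharP F 3]
    (a b : F) (ha : a ≠ 0) (hb : b ^ 3 = a)
    (W : WeierstrassCurve F) (hW : W = ⟨0, 1, 0, 0, -a⟩)
    (h₁ : W.toAffine.Nonsingular b b) (h₂ : W.toAffine.Nonsingular b (-b)) :
    W.toAffine.Equation b b ∧ W.toAffine.Equation b (-b) ∧
      3 • WeierstrassCurve.Affine.Point.some (h := h₁) = 0 ∧
      3 • WeierstrassCurve.Affine.Point.some (h := h₂) = 0 := by
  subst hW hb
  have hb0 : b ≠ 0 := by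
    rintro rfl
    simp at ha
  have hP : 3 • Point.some (h := h₁) = 0 :=
    Point.three_nsmul_eq_zero_of_addX_slope_eq (cubeCurve_self_ne_negY hb0)
      (cubeCurve_addX_slope hb0)
  have hneg : Point.some (h := h₂) = -Point.some (h := h₁) := by
    simp only [Point.neg_some, cubeCurve_negY]
  refine ⟨cubeCurve_equation_self b, cubeCurve_equation_neg b, hP, ?_⟩
  rw [hneg, smul_neg, hP, neg_zero]

open Classical in
/-- For `a ≠ 0` and `b` the cube root of `a`, the points `(b, b)` and
`(b, -b)` lie on `y² = x³ + x² - a` and satisfy `3 • P = 0` in the group of points. -/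
theorem cube_root_points_order_three
    (F : Type*) [Field F] [Fintype F] [CharP F 3]
    (a b : F) (ha : a ≠ 0) (hb : b ^ 3 = a)
    (W : WeierstrassCurve F) (hW : W = ⟨0, 1, 0, 0, -a⟩)
    (h₁ : W.toAffine.Nonsingular b b) (h₂ : W.toAffine.Nonsingular b (-b)) :
    W.toAffine.Equation b b ∧ W.toAffine.Equation b (-b) ∧
      3 • WeierstrassCurve.Affine.Point.some (h := h₁) = 0 ∧
      3 • WeierstrassCurve.Affine.Point.some (h := h₂) = 0 :=
  cube_root_points_order_three_general F a b ha hb W hW h₁ h₂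
end

section
/- In a field of characteristic 3, the rational map u ↦ ((u^3 − a)^3 + a·u^3)/(u^3 − a)^2 applied to the x-coordinate u of a point P = (u, v) on the curve y^2 = x^3 + x^2 − a (with u^3 ≠ a) gives the x-coordinate of the point 3P under the elliptic curve group law. -/
/-!
On `y² = x³ + a₂x² + a₆` in characteristic `3` the tangent slope at `P = (x, y)` is `a₂x / y`, so
`2P` and then `3P = 2P + P` have explicit coordinates. With `s = x³ + a₆` (so that `a₂s` is the
`3`-division polynomial `ψ₃`) one finds `x(3P) = x - xy²/s + y⁶/(a₂²s²)`, and `y` is eliminated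
through `y² = s + a₂x²` and the Frobenius identity `(s + a₂x²)³ = s³ + a₂³x⁶`. If `y = 0`, then
`P` has order `2`, so `3P = P`, and the same expression gives `x`.
-/

open WeierstrassCurve WeierstrassCurve.Affine WeierstrassCurve.Affine.Point

lemma sub_mul_div_add_div_eq_of_charP_three {F : Type*} [Field F] [CharP F 3] {b c x y : F}
    (hb : b ≠ 0) (hs : x ^ 3 + c ≠ 0) (hxy : y ^ 2 = x ^ 3 + b * x ^ 2 + c) :
    x - x * y ^ 2 / (x ^ 3 + c) + y ^ 6 / (b ^ 2 * (x ^ 3 + c) ^ 2) =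
      ((x ^ 3 + c) ^ 3 - b ^ 3 * c * x ^ 3) / (b ^ 2 * (x ^ 3 + c) ^ 2) := by
  have hy6 : y ^ 6 = (x ^ 3 + c) ^ 3 + (b * x ^ 2) ^ 3 := by
    rw [show y ^ 6 = (y ^ 2) ^ 3 by ring, hxy, add_right_comm, add_pow_char]
  field_simp
  linear_combination hy6 - x * b ^ 2 * (x ^ 3 + c) * hxy

lemma two_ne_zero_of_charP_three {F : Type*} [Field F] [CharP F 3] : (2 : F) ≠ 0 := fun h ↦
  one_ne_zero (by linear_combination CharP.cast_eq_zero F 3 - h : (1 : F) = 0)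

namespace WeierstrassCurve.Affine.Point

variable {F : Type*} [Field F] {W : WeierstrassCurve.Affine F}

lemma exists_some_eq_some {x x' y y' : F} (h : W.Nonsingular x y) (hx : x = x') (hy : y = y') :
    ∃ h', some x y h = some x' y' h' := by
  subst hx hy
  exact ⟨h, rfl⟩

lemma three_smul_of_Y_eq [DecidableEq F] {x y : F} {h : W.Nonsingular x y} (hy : y = W.negY x y) :
    3 • some x y h = some x y h := by
  rw [succ_nsmul, two_nsmul, add_self_of_Y_eq hy, zero_add]

end WeierstrassCurve.Affine.Point

namespace WeierstrassCurve

variable {F : Type*} [Field F] {W : WeierstrassCurve F} [W.IsCharThreeJNeZeroNF] {x y : F}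

lemma equation_iff_of_isCharThreeJNeZeroNF :
    W.toAffine.Equation x y ↔ y ^ 2 = x ^ 3 + W.a₂ * x ^ 2 + W.a₆ := by
  simp [Affine.equation_iff]

lemma negY_of_isCharThreeJNeZeroNF : W.toAffine.negY x y = -y := by
  simp [Affine.negY]

variable [CharP F 3]

lemma Y_ne_negY_of_charP_three (hy : y ≠ 0) : y ≠ W.toAffine.negY x y := by
  rw [negY_of_isCharThreeJNeZeroNF]
  intro h
  exact hy (by linear_combination (-h + y * CharP.cast_eq_zero F 3) : y = 0)

variable [DecidableEq F]

lemma slope_self_of_charP_three (hy : y ≠ 0) :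
    W.toAffine.slope x x y y = W.a₂ * x / y := by
  rw [slope_of_Y_ne rfl (Y_ne_negY_of_charP_three hy), negY_of_isCharThreeJNeZeroNF,
    div_eq_div_iff (by simpa [← two_mul, two_ne_zero_of_charP_three] using hy) hy]
  simp only [a₁_of_isCharThreeJNeZeroNF, a₄_of_isCharThreeJNeZeroNF]
  linear_combination x ^ 2 * y * CharP.cast_eq_zero F 3

lemma exists_two_smul_eq_of_charP_three {h : W.toAffine.Nonsingular x y} (hy : y ≠ 0) :
    ∃ h', 2 • some x y h = some (x - W.a₂ * (x ^ 3 + W.a₆) / y ^ 2)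
      (W.a₂ ^ 2 * x * (x ^ 3 + W.a₆) / y ^ 3 - y) h' := by
  have hxy := equation_iff_of_isCharThreeJNeZeroNF.mp h.1
  have h3 : (3 : F) = 0 := CharP.cast_eq_zero F 3
  have hX : W.toAffine.addX x x (W.a₂ * x / y) = x - W.a₂ * (x ^ 3 + W.a₆) / y ^ 2 := by
    simp only [Affine.addX, a₁_of_isCharThreeJNeZeroNF]
    field_simp
    linear_combination -W.a₂ * hxy - x * y ^ 2 * h3
  rw [two_smul, add_self_of_Y_ne (Y_ne_negY_of_charP_three hy)]
  refine exists_some_eq_some _ ?_ ?_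
  · rw [slope_self_of_charP_three hy, hX]
  · rw [slope_self_of_charP_three hy, Affine.addY, negY_of_isCharThreeJNeZeroNF, Affine.negAddY,
      hX]
    field_simp
    ring

lemma exists_three_smul_eq_of_charP_three (ha₂ : W.a₂ ≠ 0) (hs : x ^ 3 + W.a₆ ≠ 0)
    {h : W.toAffine.Nonsingular x y} (hy : y ≠ 0) :
    ∃ y' h', 3 • some x y h = some (x - x * y ^ 2 / (x ^ 3 + W.a₆) +
      y ^ 6 / (W.a₂ ^ 2 * (x ^ 3 + W.a₆) ^ 2)) y' h' := by
  have hxy := equation_iff_of_isCharThreeJNeZeroNF.mp h.1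
  have h3 : (3 : F) = 0 := CharP.cast_eq_zero F 3
  obtain ⟨h₂, h2P⟩ := exists_two_smul_eq_of_charP_three (h := h) hy
  have hx : x - W.a₂ * (x ^ 3 + W.a₆) / y ^ 2 ≠ x := by
    simp [ha₂, hs, hy]
  have hL : W.toAffine.slope (x - W.a₂ * (x ^ 3 + W.a₆) / y ^ 2) x
      (W.a₂ ^ 2 * x * (x ^ 3 + W.a₆) / y ^ 3 - y) y =
      -(W.a₂ ^ 2 * x * (x ^ 3 + W.a₆) + y ^ 4) / (W.a₂ * (x ^ 3 + W.a₆) * y) := by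
    rw [slope_of_X_ne hx]
    field_simp
    linear_combination -(W.a₂ * (x ^ 3 + W.a₆) * y ^ 4) * h3
  rw [succ_nsmul, h2P, add_of_X_ne hx]
  refine ⟨_, exists_some_eq_some _ ?_ rfl⟩
  rw [hL, Affine.addX, a₁_of_isCharThreeJNeZeroNF]
  field_simp
  linear_combination (-W.a₂ ^ 3 * (x ^ 3 + W.a₆) ^ 2) * hxy +
    (W.a₂ ^ 2 * (x ^ 3 + W.a₆) * x * y ^ 2 * (y ^ 2 - (x ^ 3 + W.a₆))) * h3

theorem exists_three_smul_eq_some_of_charP_three (ha₂ : W.a₂ ≠ 0) (hs : x ^ 3 + W.a₆ ≠ 0)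
    (h : W.toAffine.Nonsingular x y) :
    ∃ x' y' h', 3 • some x y h = some x' y' h' ∧
      x' = ((x ^ 3 + W.a₆) ^ 3 - W.a₂ ^ 3 * W.a₆ * x ^ 3) / (W.a₂ ^ 2 * (x ^ 3 + W.a₆) ^ 2) := by
  rw [← sub_mul_div_add_div_eq_of_charP_three ha₂ hs (equation_iff_of_isCharThreeJNeZeroNF.mp h.1)]
  by_cases hy : y = 0
  · refine ⟨x, y, h, three_smul_of_Y_eq ?_, by simp [hy]⟩
    rw [negY_of_isCharThreeJNeZeroNF, hy, _root_.neg_zero]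
  · obtain ⟨y', h', h3P⟩ := exists_three_smul_eq_of_charP_three ha₂ hs hy
    exact ⟨_, y', h', h3P, rfl⟩

end WeierstrassCurve

open Classical in
theorem x_coordinate_of_three_smul_general
    (F : Type*) [Field F] [CharP F 3]
    (a : F)
    (W : WeierstrassCurve F) (hW : W = ⟨0, 1, 0, 0, -a⟩)
    (u v : F) (hu : u ^ 3 ≠ a) (hP : W.toAffine.Nonsingular u v) :
    ∃ (x y : F) (h : W.toAffine.Nonsingular x y),
      3 • WeierstrassCurve.Affine.Point.some u v hP = WeierstrassCurve.Affine.Point.some x y h ∧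
      x = ((u ^ 3 - a) ^ 3 + a * u ^ 3) / (u ^ 3 - a) ^ 2 := by
  subst hW
  have : IsCharThreeJNeZeroNF ⟨0, 1, 0, 0, -a⟩ := ⟨rfl, rfl, rfl⟩
  have hs : u ^ 3 + -a ≠ 0 := by rwa [← sub_eq_add_neg, sub_ne_zero]
  obtain ⟨x, y, h, h3P, hx⟩ := exists_three_smul_eq_some_of_charP_three one_ne_zero hs hP
  exact ⟨x, y, h, h3P, hx.trans (by ring)⟩

open Classical in
/-- In characteristic 3, for an affine point `P = (u, v)` on
`y² = x³ + x² - a` with `u³ ≠ a`, the x-coordinate of `3P` is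
`((u³ - a)³ + a·u³)/(u³ - a)²`. -/
theorem x_coordinate_of_three_smul
    (F : Type*) [Field F] [CharP F 3]
    (a : F) (ha : a ≠ 0)
    (W : WeierstrassCurve F) (hW : W = ⟨0, 1, 0, 0, -a⟩)
    (u v : F) (hu : u ^ 3 ≠ a) (hP : W.toAffine.Nonsingular u v) :
    ∃ (x y : F) (h : W.toAffine.Nonsingular x y),
      3 • WeierstrassCurve.Affine.Point.some u v hP = WeierstrassCurve.Affine.Point.some x y h ∧
      x = ((u ^ 3 - a) ^ 3 + a * u ^ 3) / (u ^ 3 - a) ^ 2 :=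
  x_coordinate_of_three_smul_general F a W hW u v hu hP
end

section
/- Let F = F_{3^m} and let f(x) = x^3 + bx^2 + cx + d ∈ F[x] with b ≠ 0. If f has a root in F, then a certain trace condition holds; specializing to the cubic x^3 − ξ^{1/3}x^2 + (a(1−ξ))^{1/3}x − (a^2(a+ξ))^{1/3} arising from 3-division on E(a), the cubic has a root in F if and only if Tr( a·√(ξ^3 + ξ^2 − a) / ξ^3 ) = 0, where (ξ, √(ξ^3+ξ^2−a)) is a point of E(a)(F) and ξ ≠ 0. -/
open Module

/-- Artin–Schreier for characteristic 3: `z ↦ z^3 - z` hits exactly the kernel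
of the trace. -/
lemma artin_schreier_three (F : Type*) [Field F] [Fintype F] [Algebra (ZMod 3) F]
    [CharP F 3] (c : F) :
    (∃ z : F, z ^ 3 - z = c) ↔ Algebra.trace (ZMod 3) F c = 0 := by
  haveI : Fact (Nat.Prime 3) := ⟨by norm_num⟩
  haveI : FiniteDimensional (ZMod 3) F := Module.Finite.of_finite (R := ZMod 3)
  -- Frobenius as an algebra automorphism
  have hbij : Function.Bijective (frobenius F 3) :=
    Finite.injective_iff_bijective.mp (frobenius F 3).injective
  let σr : F ≃+* F := RingEquiv.ofBijective (frobenius F 3) hbij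
  let σ : F ≃ₐ[ZMod 3] F :=
    { σr with
      commutes' := fun r => RingHom.congr_fun
        (RingHom.ext_zmod ((σr : F →+* F).comp (algebraMap (ZMod 3) F))
          (algebraMap (ZMod 3) F)) r }
  have hσ : ∀ x : F, σ x = x ^ 3 := fun x => rfl
  have htrfrob : ∀ x : F, Algebra.trace (ZMod 3) F (x ^ 3) = Algebra.trace (ZMod 3) F x := by
    intro x
    apply (algebraMap (ZMod 3) F).injective
    rw [trace_eq_sum_automorphisms, trace_eq_sum_automorphisms, ← hσ x]
    exact Fintype.sum_equiv (Equiv.mulRight σ) (fun τ => τ (σ x)) (fun τ => τ x)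
      (fun τ => by simp [AlgEquiv.mul_apply])
  -- the Artin–Schreier map as a linear map
  let φ : F →ₗ[ZMod 3] F :=
    { toFun := fun y => y ^ 3 - y
      map_add' := fun u v => by
        show (u + v) ^ 3 - (u + v) = (u ^ 3 - u) + (v ^ 3 - v)
        rw [add_pow_char]; ring
      map_smul' := fun r y => by
        show (r • y) ^ 3 - r • y = r • (y ^ 3 - y)
        simp only [Algebra.smul_def]
        rw [mul_pow, ← map_pow, ZMod.pow_card, mul_sub] }
  have hker : LinearMap.ker φ = Submodule.span (ZMod 3) {(1 : F)} := by
    apply le_antisymm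
    · intro y hy
      have hy' : y ^ 3 - y = 0 := hy
      have hfac : y * ((y - 1) * (y + 1)) = 0 := by linear_combination hy'
      rw [Submodule.mem_span_singleton]
      rcases mul_eq_zero.mp hfac with h | h
      · exact ⟨0, by simp [h]⟩
      · rcases mul_eq_zero.mp h with h | h
        · exact ⟨1, by rw [sub_eq_zero] at h; simp [h.symm]⟩
        · refine ⟨-1, ?_⟩
          have : y = -1 := by linear_combination h
          simp [this, Algebra.smul_def]
    · rw [Submodule.span_le, Set.singleton_subset_iff]
      show (1 : F) ∈ LinearMap.ker φ
      simp only [LinearMap.mem_ker]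
      show (1 : F) ^ 3 - 1 = 0
      norm_num
  have hkerrank : finrank (ZMod 3) (LinearMap.ker φ) = 1 := by
    rw [hker]
    exact finrank_span_singleton one_ne_zero
  have hTne : (Algebra.trace (ZMod 3) F) ≠ 0 := Algebra.trace_ne_zero (ZMod 3) F
  obtain ⟨x0, hx0⟩ : ∃ x : F, Algebra.trace (ZMod 3) F x ≠ 0 := by
    by_contra h
    push_neg at h
    exact hTne (LinearMap.ext fun y => h y)
  have hTsurj : Function.Surjective (Algebra.trace (ZMod 3) F) := by
    intro t
    refine ⟨(t * (Algebra.trace (ZMod 3) F x0)⁻¹) • x0, ?_⟩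
    rw [map_smul, smul_eq_mul, mul_assoc, inv_mul_cancel₀ hx0, mul_one]
  have hφT : LinearMap.range φ ≤ LinearMap.ker (Algebra.trace (ZMod 3) F) := by
    rintro _ ⟨y, rfl⟩
    have : φ y = y ^ 3 - y := rfl
    rw [LinearMap.mem_ker, this, map_sub, htrfrob, sub_self]
  have hrr := LinearMap.finrank_range_add_finrank_ker φ
  have hrT := LinearMap.finrank_range_add_finrank_ker (Algebra.trace (ZMod 3) F)
  have hrTtop : finrank (ZMod 3) (LinearMap.range (Algebra.trace (ZMod 3) F)) = 1 := by
    rw [LinearMap.range_eq_top.mpr hTsurj, finrank_top, finrank_self]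
  have heq : LinearMap.range φ = LinearMap.ker (Algebra.trace (ZMod 3) F) :=
    Submodule.eq_of_le_of_finrank_eq hφT (by omega)
  constructor
  · rintro ⟨z, rfl⟩
    have hmem : φ z ∈ LinearMap.ker (Algebra.trace (ZMod 3) F) :=
      heq ▸ LinearMap.mem_range_self φ z
    exact LinearMap.mem_ker.mp hmem
  · intro hc
    have hmem : c ∈ LinearMap.range φ := heq ▸ LinearMap.mem_ker.mpr hc
    rcases hmem with ⟨z, hz⟩
    exact ⟨z, hz⟩

/-- For `(ξ, η)` a point of `E(a)` with `ξ ≠ 0`, the cubic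
`x³ - ξ^{1/3}x² + (a(1-ξ))^{1/3}x - (a²(a+ξ))^{1/3}` has a root in `F` iff
`Tr(a·η/ξ³) = 0`. -/
theorem cubic_root_iff_trace_zero
    (F : Type*) [Field F] [Fintype F] [Algebra (ZMod 3) F]
    (m : ℕ) (hm : 2 ≤ m) (hcard : Fintype.card F = 3 ^ m)
    (a ξ η : F) (ha : a ≠ 0) (hξ : ξ ≠ 0)
    (hη : η ^ 2 = ξ ^ 3 + ξ ^ 2 - a)
    (b c d : F) (hb : b ^ 3 = ξ) (hc : c ^ 3 = a * (1 - ξ)) (hd : d ^ 3 = a ^ 2 * (a + ξ)) :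
    (∃ x : F, x ^ 3 - b * x ^ 2 + c * x - d = 0) ↔
      Algebra.trace (ZMod 3) F (a * η / ξ ^ 3) = 0 := by
  haveI : Fact (Nat.Prime 3) := ⟨by norm_num⟩
  haveI : CharP F 3 := charP_of_injective_algebraMap (algebraMap (ZMod 3) F).injective 3
  have h3 : (3 : F) = 0 := by exact_mod_cast CharP.cast_eq_zero F 3
  -- the key polynomial identity, valid in characteristic 3 on the curve
  have key : ∀ y : F, (ξ*y - a*ξ + a)^3 - ξ^2*(ξ*y - a*ξ + a)^2 + a^2*η^2
      = ξ^3 * (y^3 - ξ*y^2 + a*(1-ξ)*y - a^2*(a+ξ)) := by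
    intro y
    linear_combination a^2 * hη +
      (a*ξ^2*y^2 - a*ξ^3*y - a*ξ^3*y^2 + a*ξ^4*y + a^2*ξ*y - 2*a^2*ξ^2*y + a^2*ξ^3
        + a^2*ξ^3*y - a^3*ξ + a^3*ξ^2) * h3
  -- cubing is surjective
  have frob_surj : ∀ t : F, ∃ s : F, s ^ 3 = t := by
    intro t
    obtain ⟨s, hs⟩ := (Finite.injective_iff_surjective.mp (frobenius F 3).injective) t
    exact ⟨s, hs⟩
  -- cubing the original cubic
  have fg : ∀ x : F, (x^3 - b*x^2 + c*x - d)^3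
      = (x^3)^3 - ξ*(x^3)^2 + a*(1-ξ)*(x^3) - a^2*(a+ξ) := by
    intro x
    have h1 : (x^3 - b*x^2 + c*x - d) = (x^3 - b*x^2) + (c*x - d) := by ring
    rw [h1, add_pow_char, sub_pow_char, sub_pow_char]
    linear_combination (-(x^6)) * hb + x^3 * hc + (-1 : F) * hd
  have stepA : (∃ x : F, x ^ 3 - b * x ^ 2 + c * x - d = 0) ↔
      (∃ y : F, y^3 - ξ*y^2 + a*(1-ξ)*y - a^2*(a+ξ) = 0) := by
    constructor
    · rintro ⟨x, hx⟩
      refine ⟨x^3, ?_⟩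
      rw [← fg x, hx]
      norm_num
    · rintro ⟨y, hy⟩
      obtain ⟨x, rfl⟩ := frob_surj y
      refine ⟨x, ?_⟩
      have h2 := fg x
      rw [hy] at h2
      exact pow_eq_zero_iff (three_ne_zero' ℕ) |>.mp h2
  have stepB : (∃ y : F, y^3 - ξ*y^2 + a*(1-ξ)*y - a^2*(a+ξ) = 0) ↔
      (∃ z : F, z^3 - z = a*η/ξ^3) := by
    by_cases hη0 : η = 0
    · subst hη0
      constructor
      · intro _
        exact ⟨0, by simp⟩
      · intro _
        refine ⟨a*(ξ-1)/ξ, ?_⟩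
        have hk := key (a*(ξ-1)/ξ)
        have hw : ξ*(a*(ξ-1)/ξ) - a*ξ + a = 0 := by
          field_simp
          ring
        rw [hw] at hk
        have hk2 : ξ^3 * ((a*(ξ-1)/ξ)^3 - ξ*(a*(ξ-1)/ξ)^2 + a*(1-ξ)*(a*(ξ-1)/ξ)
            - a^2*(a+ξ)) = 0 := by
          rw [← hk]; ring
        rcases mul_eq_zero.mp hk2 with h | h
        · exact absurd h (pow_ne_zero 3 hξ)
        · exact h
    · have hc0 : a*η/ξ^3 ≠ 0 := div_ne_zero (mul_ne_zero ha hη0) (pow_ne_zero 3 hξ)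
      constructor
      · rintro ⟨y, hy⟩
        have hw3 : (ξ*y - a*ξ + a)^3 - ξ^2*(ξ*y - a*ξ + a)^2 + a^2*η^2 = 0 := by
          rw [key y, hy, mul_zero]
        set w : F := ξ*y - a*ξ + a with hwdef
        have hw0 : w ≠ 0 := by
          intro h0
          rw [h0] at hw3
          have h2 : a^2*η^2 = 0 := by linear_combination hw3
          rcases mul_eq_zero.mp h2 with h | h
          · exact ha (pow_eq_zero_iff (by norm_num : 2 ≠ 0) |>.mp h)
          · exact hη0 (pow_eq_zero_iff (by norm_num : 2 ≠ 0) |>.mp h)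
        refine ⟨-(a*η)/(ξ*w), ?_⟩
        have hexp : ((-(a*η)/(ξ*w))^3 - (-(a*η)/(ξ*w)) - a*η/ξ^3) * (ξ^3 * w^3)
            = -(a*η) * (w^3 - ξ^2*w^2 + a^2*η^2) := by
          field_simp
          ring
        rw [hw3, mul_zero] at hexp
        rcases mul_eq_zero.mp hexp with h | h
        · linear_combination h
        · exact absurd h (mul_ne_zero (pow_ne_zero 3 hξ) (pow_ne_zero 3 hw0))
      · rintro ⟨z, hz⟩
        have hz0 : z ≠ 0 := by
          rintro rfl
          rw [show (0:F)^3 - 0 = 0 by ring] at hz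
          exact hc0 hz.symm
        refine ⟨-(a*η)/(ξ^2*z) + a*(ξ-1)/ξ, ?_⟩
        have hk := key (-(a*η)/(ξ^2*z) + a*(ξ-1)/ξ)
        have hwv : ξ*(-(a*η)/(ξ^2*z) + a*(ξ-1)/ξ) - a*ξ + a = -(a*η)/(ξ*z) := by
          field_simp
          ring
        rw [hwv] at hk
        have hexp2 : ((-(a*η)/(ξ*z))^3 - ξ^2*(-(a*η)/(ξ*z))^2 + a^2*η^2) * z^3
            = a^2*η^2 * (z^3 - z - a*η/ξ^3) := by
          field_simp
          ring
        have hzz : z^3 - z - a*η/ξ^3 = 0 := by rw [hz]; ring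
        rw [hzz, mul_zero] at hexp2
        have hL : (-(a*η)/(ξ*z))^3 - ξ^2*(-(a*η)/(ξ*z))^2 + a^2*η^2 = 0 := by
          rcases mul_eq_zero.mp hexp2 with h | h
          · exact h
          · exact absurd h (pow_ne_zero 3 hz0)
        rw [hL] at hk
        rcases mul_eq_zero.mp hk.symm with h | h
        · exact absurd h (pow_ne_zero 3 hξ)
        · exact h
  rw [stepA, stepB]
  exact artin_schreier_three F (a*η/ξ^3)
end
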